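/- arXiv:1402.3099 — 6 statements merged into one kernel-verified Lean document; each statement's English description precedes it below -/
import Mathlib

section
/- Let V₁,…,V₅ : I → E⁵ be a Frenet frame with positive smooth curvatures k₁,k₂,k₃,k₄ satisfying the Frenet equations on an open interval I. If U ∈ E⁵ is a constant unit vector such that ⟪V₁(s), U⟫ = cos θ is a nonzero constant on I (so the curve is a V₁-helix with axis U), then for every s ∈ I one has U = cos θ · [ V₁(s) + (k₁/k₂)(s)·V₃(s) + (1/k₃)(s)·(k₁/k₂)′(s)·V₄(s) + (1/k₄)(s)·( (k₁k₃/k₂)(s) + ((1/k₃)·(k₁/k₂)′)′(s) )·V₅(s) ]. -/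
open Real
open scoped RealInnerProductSpace ContDiff

/-! With `aᵢ = ⟪Vᵢ, U⟫` we have `U = ∑ aᵢ Vᵢ`, and the Frenet equations give
`aᵢ' = -kᵢ₋₁ aᵢ₋₁ + kᵢ aᵢ₊₁`. Starting from `a₁ = cos θ`, each of the first four equations,
solved for its last term, determines the next coefficient: `a₂ = 0`, `a₃ = cos θ · k₁/k₂`, and so on.
Since `aᵢ` agrees with `cos θ · gᵢ` on an open interval, `aᵢ' = cos θ · deriv gᵢ` there, because
`deriv (c * g) = c * deriv g` holds for every `g`, differentiable or not. -/

theorem Orthonormal.sum_inner_smul_eq_of_card_eq_finrank {𝕜 E ι : Type*} [RCLike 𝕜]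
    [NormedAddCommGroup E] [InnerProductSpace 𝕜 E] [FiniteDimensional 𝕜 E] [Fintype ι]
    {v : ι → E} (hv : Orthonormal 𝕜 v) (hcard : Fintype.card ι = Module.finrank 𝕜 E) (x : E) :
    ∑ i, inner 𝕜 (v i) x • v i = x := by
  have hspan := (hv.linearIndependent.span_eq_top_of_card_eq_finrank' hcard).ge
  simpa using (OrthonormalBasis.mk hv hspan).sum_repr' x

section FrenetComponents

variable {E : Type*} [NormedAddCommGroup E] [InnerProductSpace ℝ E]
  {I : Set ℝ} {V : ℝ → E} {U D P Q : E} {A : ℝ → ℝ} {κ κ' t : ℝ}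

theorem inner_eq_deriv_of_hasDerivAt (hI : IsOpen I) (ht : t ∈ I)
    (hA : ∀ u ∈ I, ⟪V u, U⟫ = A u) (hV : HasDerivAt V D t) : ⟪D, U⟫ = deriv A t := by
  have hd : HasDerivAt (fun u => ⟪V u, U⟫) ⟪D, U⟫ t := by
    simpa using hV.inner ℝ (hasDerivAt_const t U)
  rw [← hd.deriv]
  exact (Set.EqOn.eventuallyEq_of_mem hA (hI.mem_nhds ht)).deriv_eq

theorem inner_eq_div_of_hasDerivAt_frenet (hI : IsOpen I) (ht : t ∈ I)
    (hA : ∀ u ∈ I, ⟪V u, U⟫ = A u) (hV : HasDerivAt V (-κ • P + κ' • Q) t)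
    (hκ' : κ' ≠ 0) : ⟪Q, U⟫ = (deriv A t + κ * ⟪P, U⟫) / κ' := by
  have h := inner_eq_deriv_of_hasDerivAt hI ht hA hV
  rw [inner_add_left, real_inner_smul_left, real_inner_smul_left] at h
  field_simp
  linarith

end FrenetComponents

theorem stmt_1_general
    (a b : ℝ)
    (V₁ V₂ V₃ V₄ V₅ : ℝ → EuclideanSpace ℝ (Fin 5))
    (k₁ k₂ k₃ k₄ : ℝ → ℝ)
    (hk₁ : ∀ s ∈ Set.Ioo a b, 0 < k₁ s)
    (hk₂ : ∀ s ∈ Set.Ioo a b, 0 < k₂ s)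
    (hk₃ : ∀ s ∈ Set.Ioo a b, 0 < k₃ s)
    (hk₄ : ∀ s ∈ Set.Ioo a b, 0 < k₄ s)
    (horth : ∀ s ∈ Set.Ioo a b, Orthonormal ℝ ![V₁ s, V₂ s, V₃ s, V₄ s, V₅ s])
    (hF₁ : ∀ s ∈ Set.Ioo a b, HasDerivAt V₁ (k₁ s • V₂ s) s)
    (hF₂ : ∀ s ∈ Set.Ioo a b, HasDerivAt V₂ (-(k₁ s) • V₁ s + k₂ s • V₃ s) s)
    (hF₃ : ∀ s ∈ Set.Ioo a b, HasDerivAt V₃ (-(k₂ s) • V₂ s + k₃ s • V₄ s) s)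
    (hF₄ : ∀ s ∈ Set.Ioo a b, HasDerivAt V₄ (-(k₃ s) • V₃ s + k₄ s • V₅ s) s)
    (U : EuclideanSpace ℝ (Fin 5)) (θ : ℝ)
    (hhelix : ∀ s ∈ Set.Ioo a b, ⟪V₁ s, U⟫ = Real.cos θ) :
    ∀ s ∈ Set.Ioo a b,
      U = Real.cos θ •
        (V₁ s + (k₁ s / k₂ s) • V₃ s
          + ((1 / k₃ s) * deriv (fun t => k₁ t / k₂ t) s) • V₄ s
          + ((1 / k₄ s) *
              (k₁ s * k₃ s / k₂ s
                + deriv (fun t => (1 / k₃ t) * deriv (fun u => k₁ u / k₂ u) t) s)) • V₅ s) := by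
  intro s hs
  have hI : IsOpen (Set.Ioo a b) := isOpen_Ioo
  set c := Real.cos θ
  set g : ℝ → ℝ := fun t => k₁ t / k₂ t
  set f : ℝ → ℝ := fun t => 1 / k₃ t * deriv g t
  have h₂ : ∀ t ∈ Set.Ioo a b, ⟪V₂ t, U⟫ = 0 := fun t ht => by
    have h := inner_eq_deriv_of_hasDerivAt hI ht hhelix (hF₁ t ht)
    rw [real_inner_smul_left, deriv_const, mul_eq_zero] at h
    exact h.resolve_left (hk₁ t ht).ne'
  have h₃ : ∀ t ∈ Set.Ioo a b, ⟪V₃ t, U⟫ = c * g t := fun t ht => by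
    rw [inner_eq_div_of_hasDerivAt_frenet hI ht h₂ (hF₂ t ht) (hk₂ t ht).ne', hhelix t ht]
    simp only [deriv_const, g]
    ring
  have h₄ : ∀ t ∈ Set.Ioo a b, ⟪V₄ t, U⟫ = c * f t := fun t ht => by
    rw [inner_eq_div_of_hasDerivAt_frenet hI ht h₃ (hF₃ t ht) (hk₃ t ht).ne', h₂ t ht,
      deriv_const_mul_field]
    simp only [f]
    ring
  have h₅ : ⟪V₅ s, U⟫ = c * (1 / k₄ s * (k₁ s * k₃ s / k₂ s + deriv f s)) := by
    rw [inner_eq_div_of_hasDerivAt_frenet hI hs h₄ (hF₄ s hs) (hk₄ s hs).ne', h₃ s hs,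
      deriv_const_mul_field]
    ring
  rw [← (horth s hs).sum_inner_smul_eq_of_card_eq_finrank (by simp) U]
  simp only [Fin.sum_univ_five, Matrix.cons_val_zero, Matrix.cons_val_one, Matrix.cons_val]
  rw [hhelix s hs, h₂ s hs, h₃ s hs, h₄ s hs, h₅]
  match_scalars <;> ring

theorem stmt_1
    (a b : ℝ) (hab : a < b)
    (V₁ V₂ V₃ V₄ V₅ : ℝ → EuclideanSpace ℝ (Fin 5))
    (k₁ k₂ k₃ k₄ : ℝ → ℝ)
    (hV₁s : ContDiffOn ℝ ∞ V₁ (Set.Ioo a b))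
    (hV₂s : ContDiffOn ℝ ∞ V₂ (Set.Ioo a b))
    (hV₃s : ContDiffOn ℝ ∞ V₃ (Set.Ioo a b))
    (hV₄s : ContDiffOn ℝ ∞ V₄ (Set.Ioo a b))
    (hV₅s : ContDiffOn ℝ ∞ V₅ (Set.Ioo a b))
    (hk₁s : ContDiffOn ℝ ∞ k₁ (Set.Ioo a b))
    (hk₂s : ContDiffOn ℝ ∞ k₂ (Set.Ioo a b))
    (hk₃s : ContDiffOn ℝ ∞ k₃ (Set.Ioo a b))
    (hk₄s : ContDiffOn ℝ ∞ k₄ (Set.Ioo a b))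
    (hk₁ : ∀ s ∈ Set.Ioo a b, 0 < k₁ s)
    (hk₂ : ∀ s ∈ Set.Ioo a b, 0 < k₂ s)
    (hk₃ : ∀ s ∈ Set.Ioo a b, 0 < k₃ s)
    (hk₄ : ∀ s ∈ Set.Ioo a b, 0 < k₄ s)
    (horth : ∀ s ∈ Set.Ioo a b, Orthonormal ℝ ![V₁ s, V₂ s, V₃ s, V₄ s, V₅ s])
    (hF₁ : ∀ s ∈ Set.Ioo a b, HasDerivAt V₁ (k₁ s • V₂ s) s)
    (hF₂ : ∀ s ∈ Set.Ioo a b, HasDerivAt V₂ (-(k₁ s) • V₁ s + k₂ s • V₃ s) s)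
    (hF₃ : ∀ s ∈ Set.Ioo a b, HasDerivAt V₃ (-(k₂ s) • V₂ s + k₃ s • V₄ s) s)
    (hF₄ : ∀ s ∈ Set.Ioo a b, HasDerivAt V₄ (-(k₃ s) • V₃ s + k₄ s • V₅ s) s)
    (hF₅ : ∀ s ∈ Set.Ioo a b, HasDerivAt V₅ (-(k₄ s) • V₄ s) s)
    (U : EuclideanSpace ℝ (Fin 5)) (θ : ℝ)
    (hU : ‖U‖ = 1) (hθ : Real.cos θ ≠ 0)
    (hhelix : ∀ s ∈ Set.Ioo a b, ⟪V₁ s, U⟫ = Real.cos θ) :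
    ∀ s ∈ Set.Ioo a b,
      U = Real.cos θ •
        (V₁ s + (k₁ s / k₂ s) • V₃ s
          + ((1 / k₃ s) * deriv (fun t => k₁ t / k₂ t) s) • V₄ s
          + ((1 / k₄ s) *
              (k₁ s * k₃ s / k₂ s
                + deriv (fun t => (1 / k₃ t) * deriv (fun u => k₁ u / k₂ u) t) s)) • V₅ s) :=
  stmt_1_general a b V₁ V₂ V₃ V₄ V₅ k₁ k₂ k₃ k₄ hk₁ hk₂ hk₃ hk₄ horth hF₁ hF₂ hF₃ hF₄ U θ hhelix
end

section
/- Let V₁,…,V₅ : I → E⁵ be a Frenet frame with positive smooth curvatures k₁,k₂,k₃,k₄ satisfying the Frenet equations on an open interval I. Then there exists a constant unit vector U ∈ E⁵ such that s ↦ ⟪V₁(s), U⟫ is a nonzero constant on I (i.e., the curve is a V₁-helix) if and only if there exists a C² function f : I → ℝ satisfying both k₄·f = k₁k₃/k₂ + ((1/k₃)·(k₁/k₂)′)′ and (1/k₄)·f′ = −(1/k₃)·(k₁/k₂)′ on I. -/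
open Real
open scoped RealInnerProductSpace ContDiff

/-!
If `U` is a fixed vector, the components `aᵢ = ⟪Vᵢ, U⟫` satisfy the Frenet system read backwards:
`a₁' = k₁a₂`, `a₂' = -k₁a₁ + k₂a₃`, `a₃' = -k₂a₂ + k₃a₄`, `a₄' = -k₃a₃ + k₄a₅`, `a₅' = -k₄a₄`.
When `a₁ = c ≠ 0` is constant these equations successively force `a₂ = 0`, `a₃ = cκ` and `a₄ = cτ`,
where `κ = k₁/k₂` and `τ = κ'/k₃`; the last two equations then say that `f = a₅/c` satisfies
`k₄f = k₃κ + τ'` and `f' = -k₄τ`. Conversely, given such an `f`, the Frenet equations show that the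
axis `W = V₁ + κV₃ + τV₄ + fV₅` has zero derivative, so it is constant, and `⟪V₁, W⟫ = 1`;
`U = W/‖W‖` is then the required direction.
-/

open Set Filter

section Frenet

variable {E : Type*} [NormedAddCommGroup E] [InnerProductSpace ℝ E]
  {I : Set ℝ} {V₁ V₂ V₃ V₄ V₅ : ℝ → E} {k₁ k₂ k₃ k₄ κ τ : ℝ → ℝ}

theorem HasDerivAt.inner_const {V : ℝ → E} {V' : E} {s : ℝ} (hV : HasDerivAt V V' s) (U : E) :
    HasDerivAt (fun t => ⟪V t, U⟫) ⟪V', U⟫ s := by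
  simpa using hV.inner ℝ (hasDerivAt_const s U)

theorem ContDiffOn.hasDerivAt_deriv {F : Type*} [NormedAddCommGroup F] [NormedSpace ℝ F]
    {f : ℝ → F} {n : WithTop ℕ∞} {s : ℝ} (hf : ContDiffOn ℝ n f I) (hn : n ≠ 0)
    (hI : IsOpen I) (hs : s ∈ I) : HasDerivAt f (deriv f s) s :=
  (hf.differentiableOn hn).hasDerivAt (hI.mem_nhds hs)

theorem hasDerivAt_curvature_ratio (hI : IsOpen I) (hk₁s : ContDiffOn ℝ ∞ k₁ I)
    (hk₂s : ContDiffOn ℝ ∞ k₂ I) (hk₃s : ContDiffOn ℝ ∞ k₃ I) (hk₂ : ∀ s ∈ I, k₂ s ≠ 0)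
    (hk₃ : ∀ s ∈ I, k₃ s ≠ 0) (hκ : κ = fun u => k₁ u / k₂ u)
    (hτ : τ = fun t => (1 / k₃ t) * deriv κ t) :
    (∀ s ∈ I, HasDerivAt κ (k₃ s * τ s) s) ∧ ∀ s ∈ I, HasDerivAt τ (deriv τ s) s := by
  have hκs : ContDiffOn ℝ ∞ κ I := hκ ▸ hk₁s.div hk₂s hk₂
  have hτs : ContDiffOn ℝ ∞ τ I :=
    hτ ▸ (contDiffOn_const.div hk₃s hk₃).mul (hκs.deriv_of_isOpen hI le_rfl)
  refine ⟨fun s hs => ?_, fun s hs => hτs.hasDerivAt_deriv (by simp) hI hs⟩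
  rw [hτ, ← mul_assoc, mul_one_div_cancel (hk₃ s hs), one_mul]
  exact hκs.hasDerivAt_deriv (by simp) hI hs

theorem inner_frenet_of_inner_eq_const {τ' : ℝ → ℝ} {U : E} {c : ℝ} (hI : IsOpen I)
    (hF₁ : ∀ s ∈ I, HasDerivAt V₁ (k₁ s • V₂ s) s)
    (hF₂ : ∀ s ∈ I, HasDerivAt V₂ (-(k₁ s) • V₁ s + k₂ s • V₃ s) s)
    (hF₃ : ∀ s ∈ I, HasDerivAt V₃ (-(k₂ s) • V₂ s + k₃ s • V₄ s) s)
    (hF₄ : ∀ s ∈ I, HasDerivAt V₄ (-(k₃ s) • V₃ s + k₄ s • V₅ s) s)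
    (hk₁ : ∀ s ∈ I, k₁ s ≠ 0) (hk₂ : ∀ s ∈ I, k₂ s ≠ 0) (hk₃ : ∀ s ∈ I, k₃ s ≠ 0)
    (hκ : ∀ s ∈ I, κ s * k₂ s = k₁ s) (hκ' : ∀ s ∈ I, HasDerivAt κ (k₃ s * τ s) s)
    (hτ' : ∀ s ∈ I, HasDerivAt τ (τ' s) s) (hU : ∀ s ∈ I, ⟪V₁ s, U⟫ = c) (s : ℝ) (hs : s ∈ I) :
    ⟪V₄ s, U⟫ = c * τ s ∧ k₄ s * ⟪V₅ s, U⟫ = c * (k₃ s * κ s + τ' s) := by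
  have hderiv : ∀ {V : ℝ → E} {V' : E} {φ : ℝ → ℝ} {φ' : ℝ} {s : ℝ}, s ∈ I →
      HasDerivAt V V' s → HasDerivAt φ φ' s → (∀ t ∈ I, ⟪V t, U⟫ = φ t) → ⟪V', U⟫ = φ' :=
    fun hs hV hφ h =>
      (hV.inner_const U).unique (hφ.congr_of_eventuallyEq (eventuallyEq_of_mem (hI.mem_nhds hs) h))
  have h₂ : ∀ s ∈ I, ⟪V₂ s, U⟫ = 0 := fun s hs => by
    have h := hderiv hs (hF₁ s hs) (hasDerivAt_const s c) hU
    rw [real_inner_smul_left] at h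
    exact (mul_eq_zero.mp h).resolve_left (hk₁ s hs)
  have h₃ : ∀ s ∈ I, ⟪V₃ s, U⟫ = c * κ s := fun s hs => by
    have h := hderiv hs (hF₂ s hs) (hasDerivAt_const s 0) h₂
    rw [inner_add_left, real_inner_smul_left, real_inner_smul_left, hU s hs] at h
    refine mul_left_cancel₀ (hk₂ s hs) ?_
    linear_combination h - c * hκ s hs
  have h₄ : ∀ s ∈ I, ⟪V₄ s, U⟫ = c * τ s := fun s hs => by
    have h := hderiv hs (hF₃ s hs) ((hκ' s hs).const_mul c) h₃
    rw [inner_add_left, real_inner_smul_left, real_inner_smul_left, h₂ s hs] at h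
    refine mul_left_cancel₀ (hk₃ s hs) ?_
    linear_combination h
  refine ⟨h₄ s hs, ?_⟩
  have h := hderiv hs (hF₄ s hs) ((hτ' s hs).const_mul c) h₄
  rw [inner_add_left, real_inner_smul_left, real_inner_smul_left, h₃ s hs] at h
  linear_combination h

theorem hasDerivAt_frenet_axis {f : ℝ → ℝ} {τ' s : ℝ}
    (hF₁ : HasDerivAt V₁ (k₁ s • V₂ s) s)
    (hF₃ : HasDerivAt V₃ (-(k₂ s) • V₂ s + k₃ s • V₄ s) s)
    (hF₄ : HasDerivAt V₄ (-(k₃ s) • V₃ s + k₄ s • V₅ s) s)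
    (hF₅ : HasDerivAt V₅ (-(k₄ s) • V₄ s) s)
    (hκ : κ s * k₂ s = k₁ s) (hκ' : HasDerivAt κ (k₃ s * τ s) s) (hτ' : HasDerivAt τ τ' s)
    (hf : HasDerivAt f (-(k₄ s * τ s)) s) (hτf : k₄ s * f s = k₃ s * κ s + τ') :
    HasDerivAt (fun t => V₁ t + κ t • V₃ t + τ t • V₄ t + f t • V₅ t) 0 s := by
  refine (((hF₁.add (hκ'.smul hF₃)).add (hτ'.smul hF₄)).add (hf.smul hF₅)).congr_deriv ?_
  rw [← hκ, show τ' = k₄ s * f s - k₃ s * κ s by linarith]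
  module

theorem inner_frenet_axis {v₁ v₂ v₃ v₄ v₅ : E} (ho : Orthonormal ℝ ![v₁, v₂, v₃, v₄, v₅])
    (x y z : ℝ) : ⟪v₁, v₁ + x • v₃ + y • v₄ + z • v₅⟫ = 1 := by
  have ho' := (orthonormal_iff_ite (𝕜 := ℝ)).mp ho
  have h₁₁ : ⟪v₁, v₁⟫ = 1 := by simpa using ho' 0 0
  have h₁₃ : ⟪v₁, v₃⟫ = 0 := by simpa using ho' 0 2
  have h₁₄ : ⟪v₁, v₄⟫ = 0 := by simpa using ho' 0 3
  have h₁₅ : ⟪v₁, v₅⟫ = 0 := by simpa using ho' 0 4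
  simp only [inner_add_right, real_inner_smul_right, h₁₁, h₁₃, h₁₄, h₁₅]
  ring

theorem exists_unit_inner_eq_of_inner_eq_one {V : ℝ → E} {w : E} (hI : I.Nonempty)
    (h : ∀ s ∈ I, ⟪V s, w⟫ = 1) :
    ∃ U : E, ‖U‖ = 1 ∧ ∃ c : ℝ, c ≠ 0 ∧ ∀ s ∈ I, ⟪V s, U⟫ = c := by
  obtain ⟨s₀, hs₀⟩ := hI
  have hw : ‖w‖ ≠ 0 := by
    rw [norm_ne_zero_iff]
    rintro rfl
    simpa using h s₀ hs₀
  refine ⟨‖w‖⁻¹ • w, ?_, ‖w‖⁻¹, inv_ne_zero hw, fun s hs => ?_⟩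
  · rw [norm_smul, norm_inv, norm_norm, inv_mul_cancel₀ hw]
  · rw [real_inner_smul_right, h s hs, mul_one]

theorem exists_inner_eq_const_of_frenet_axis {f τ' : ℝ → ℝ} (hI : IsOpen I)
    (hIc : IsPreconnected I) (hIne : I.Nonempty)
    (horth : ∀ s ∈ I, Orthonormal ℝ ![V₁ s, V₂ s, V₃ s, V₄ s, V₅ s])
    (hF₁ : ∀ s ∈ I, HasDerivAt V₁ (k₁ s • V₂ s) s)
    (hF₃ : ∀ s ∈ I, HasDerivAt V₃ (-(k₂ s) • V₂ s + k₃ s • V₄ s) s)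
    (hF₄ : ∀ s ∈ I, HasDerivAt V₄ (-(k₃ s) • V₃ s + k₄ s • V₅ s) s)
    (hF₅ : ∀ s ∈ I, HasDerivAt V₅ (-(k₄ s) • V₄ s) s)
    (hκ : ∀ s ∈ I, κ s * k₂ s = k₁ s) (hκ' : ∀ s ∈ I, HasDerivAt κ (k₃ s * τ s) s)
    (hτ' : ∀ s ∈ I, HasDerivAt τ (τ' s) s) (hf : ∀ s ∈ I, HasDerivAt f (-(k₄ s * τ s)) s)
    (hτf : ∀ s ∈ I, k₄ s * f s = k₃ s * κ s + τ' s) :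
    ∃ U : E, ‖U‖ = 1 ∧ ∃ c : ℝ, c ≠ 0 ∧ ∀ s ∈ I, ⟪V₁ s, U⟫ = c := by
  have hW : ∀ s ∈ I, HasDerivAt (fun t => V₁ t + κ t • V₃ t + τ t • V₄ t + f t • V₅ t) 0 s :=
    fun s hs => hasDerivAt_frenet_axis (hF₁ s hs) (hF₃ s hs) (hF₄ s hs) (hF₅ s hs) (hκ s hs)
      (hκ' s hs) (hτ' s hs) (hf s hs) (hτf s hs)
  obtain ⟨w, hw⟩ := hI.exists_is_const_of_deriv_eq_zero hIc
    (fun s hs => (hW s hs).differentiableAt.differentiableWithinAt) (fun s hs => (hW s hs).deriv)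
  refine exists_unit_inner_eq_of_inner_eq_one (w := w) hIne fun s hs => ?_
  rw [← hw s hs]
  exact inner_frenet_axis (horth s hs) _ _ _

end Frenet

theorem stmt_2_general
    (a b : ℝ) (hab : a < b)
    (V₁ V₂ V₃ V₄ V₅ : ℝ → EuclideanSpace ℝ (Fin 5))
    (k₁ k₂ k₃ k₄ : ℝ → ℝ)
    (hV₅s : ContDiffOn ℝ ∞ V₅ (Set.Ioo a b))
    (hk₁s : ContDiffOn ℝ ∞ k₁ (Set.Ioo a b))
    (hk₂s : ContDiffOn ℝ ∞ k₂ (Set.Ioo a b))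
    (hk₃s : ContDiffOn ℝ ∞ k₃ (Set.Ioo a b))
    (hk₁ : ∀ s ∈ Set.Ioo a b, 0 < k₁ s)
    (hk₂ : ∀ s ∈ Set.Ioo a b, 0 < k₂ s)
    (hk₃ : ∀ s ∈ Set.Ioo a b, 0 < k₃ s)
    (hk₄ : ∀ s ∈ Set.Ioo a b, 0 < k₄ s)
    (horth : ∀ s ∈ Set.Ioo a b, Orthonormal ℝ ![V₁ s, V₂ s, V₃ s, V₄ s, V₅ s])
    (hF₁ : ∀ s ∈ Set.Ioo a b, HasDerivAt V₁ (k₁ s • V₂ s) s)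
    (hF₂ : ∀ s ∈ Set.Ioo a b, HasDerivAt V₂ (-(k₁ s) • V₁ s + k₂ s • V₃ s) s)
    (hF₃ : ∀ s ∈ Set.Ioo a b, HasDerivAt V₃ (-(k₂ s) • V₂ s + k₃ s • V₄ s) s)
    (hF₄ : ∀ s ∈ Set.Ioo a b, HasDerivAt V₄ (-(k₃ s) • V₃ s + k₄ s • V₅ s) s)
    (hF₅ : ∀ s ∈ Set.Ioo a b, HasDerivAt V₅ (-(k₄ s) • V₄ s) s)
    :
    (∃ U : EuclideanSpace ℝ (Fin 5), ‖U‖ = 1 ∧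
        ∃ c : ℝ, c ≠ 0 ∧ ∀ s ∈ Set.Ioo a b, ⟪V₁ s, U⟫ = c) ↔
    (∃ f : ℝ → ℝ, ContDiffOn ℝ 2 f (Set.Ioo a b) ∧
      (∀ s ∈ Set.Ioo a b,
        k₄ s * f s = k₁ s * k₃ s / k₂ s
          + deriv (fun t => (1 / k₃ t) * deriv (fun u => k₁ u / k₂ u) t) s) ∧
      (∀ s ∈ Set.Ioo a b,
        (1 / k₄ s) * deriv f s = -((1 / k₃ s) * deriv (fun t => k₁ t / k₂ t) s))) := by
  set I := Set.Ioo a b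
  set κ : ℝ → ℝ := fun u => k₁ u / k₂ u with hκdef
  set τ : ℝ → ℝ := fun t => (1 / k₃ t) * deriv κ t with hτdef
  have hI : IsOpen I := isOpen_Ioo
  have hk₂' : ∀ s ∈ I, k₂ s ≠ 0 := fun s hs => (hk₂ s hs).ne'
  have hk₃' : ∀ s ∈ I, k₃ s ≠ 0 := fun s hs => (hk₃ s hs).ne'
  have hκ : ∀ s ∈ I, κ s * k₂ s = k₁ s := fun s hs => div_mul_cancel₀ _ (hk₂' s hs)
  obtain ⟨hκ', hτ'⟩ := hasDerivAt_curvature_ratio hI hk₁s hk₂s hk₃s hk₂' hk₃' hκdef hτdef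
  constructor
  · rintro ⟨U, -, c, hc, hU⟩
    have hU₄₅ := inner_frenet_of_inner_eq_const hI hF₁ hF₂ hF₃ hF₄ (fun s hs => (hk₁ s hs).ne')
      hk₂' hk₃' hκ hκ' hτ' hU
    refine ⟨fun s => ⟪V₅ s, U⟫ / c, ((hV₅s.inner ℝ contDiffOn_const).div_const c).of_le
      (WithTop.coe_le_coe.mpr le_top), fun s hs => ?_, fun s hs => ?_⟩
    · have h := (hU₄₅ s hs).2
      rw [hκdef] at h
      field_simp
      linear_combination h
    · have hk₄' := (hk₄ s hs).ne'
      rw [(((hF₅ s hs).inner_const U).div_const c).deriv, real_inner_smul_left, (hU₄₅ s hs).1,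
        hτdef]
      field_simp
  · rintro ⟨f, hf, hf₁, hf₂⟩
    have hf' : ∀ s ∈ I, HasDerivAt f (-(k₄ s * τ s)) s := fun s hs => by
      have h := hf₂ s hs
      rw [one_div, inv_mul_eq_iff_eq_mul₀ (hk₄ s hs).ne'] at h
      rw [show -(k₄ s * τ s) = deriv f s by rw [h, mul_neg]]
      exact hf.hasDerivAt_deriv (by simp) hI hs
    have hτf : ∀ s ∈ I, k₄ s * f s = k₃ s * κ s + deriv τ s := fun s hs => by
      rw [hf₁ s hs, hκdef]
      ring
    exact exists_inner_eq_const_of_frenet_axis hI isPreconnected_Ioo (nonempty_Ioo.2 hab) horth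
      hF₁ hF₃ hF₄ hF₅ hκ hκ' hτ' hf' hτf

theorem stmt_2
    (a b : ℝ) (hab : a < b)
    (V₁ V₂ V₃ V₄ V₅ : ℝ → EuclideanSpace ℝ (Fin 5))
    (k₁ k₂ k₃ k₄ : ℝ → ℝ)
    (hV₁s : ContDiffOn ℝ ∞ V₁ (Set.Ioo a b))
    (hV₂s : ContDiffOn ℝ ∞ V₂ (Set.Ioo a b))
    (hV₃s : ContDiffOn ℝ ∞ V₃ (Set.Ioo a b))
    (hV₄s : ContDiffOn ℝ ∞ V₄ (Set.Ioo a b))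
    (hV₅s : ContDiffOn ℝ ∞ V₅ (Set.Ioo a b))
    (hk₁s : ContDiffOn ℝ ∞ k₁ (Set.Ioo a b))
    (hk₂s : ContDiffOn ℝ ∞ k₂ (Set.Ioo a b))
    (hk₃s : ContDiffOn ℝ ∞ k₃ (Set.Ioo a b))
    (hk₄s : ContDiffOn ℝ ∞ k₄ (Set.Ioo a b))
    (hk₁ : ∀ s ∈ Set.Ioo a b, 0 < k₁ s)
    (hk₂ : ∀ s ∈ Set.Ioo a b, 0 < k₂ s)
    (hk₃ : ∀ s ∈ Set.Ioo a b, 0 < k₃ s)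
    (hk₄ : ∀ s ∈ Set.Ioo a b, 0 < k₄ s)
    (horth : ∀ s ∈ Set.Ioo a b, Orthonormal ℝ ![V₁ s, V₂ s, V₃ s, V₄ s, V₅ s])
    (hF₁ : ∀ s ∈ Set.Ioo a b, HasDerivAt V₁ (k₁ s • V₂ s) s)
    (hF₂ : ∀ s ∈ Set.Ioo a b, HasDerivAt V₂ (-(k₁ s) • V₁ s + k₂ s • V₃ s) s)
    (hF₃ : ∀ s ∈ Set.Ioo a b, HasDerivAt V₃ (-(k₂ s) • V₂ s + k₃ s • V₄ s) s)
    (hF₄ : ∀ s ∈ Set.Ioo a b, HasDerivAt V₄ (-(k₃ s) • V₃ s + k₄ s • V₅ s) s)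
    (hF₅ : ∀ s ∈ Set.Ioo a b, HasDerivAt V₅ (-(k₄ s) • V₄ s) s)
    :
    (∃ U : EuclideanSpace ℝ (Fin 5), ‖U‖ = 1 ∧
        ∃ c : ℝ, c ≠ 0 ∧ ∀ s ∈ Set.Ioo a b, ⟪V₁ s, U⟫ = c) ↔
    (∃ f : ℝ → ℝ, ContDiffOn ℝ 2 f (Set.Ioo a b) ∧
      (∀ s ∈ Set.Ioo a b,
        k₄ s * f s = k₁ s * k₃ s / k₂ s
          + deriv (fun t => (1 / k₃ t) * deriv (fun u => k₁ u / k₂ u) t) s) ∧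
      (∀ s ∈ Set.Ioo a b,
        (1 / k₄ s) * deriv f s = -((1 / k₃ s) * deriv (fun t => k₁ t / k₂ t) s))) :=
  stmt_2_general a b hab V₁ V₂ V₃ V₄ V₅ k₁ k₂ k₃ k₄ hV₅s hk₁s hk₂s hk₃s hk₁ hk₂ hk₃ hk₄ horth hF₁
    hF₂ hF₃ hF₄ hF₅
end

section
/- Let V₁,…,V₅ : I → E⁵ be a Frenet frame with positive smooth curvatures k₁,k₂,k₃,k₄ satisfying the Frenet equations on an open interval I. If each of the curvatures k₁, k₂, k₃, k₄ is a constant function on I (i.e., the curve is a W-curve), then there exists a constant unit vector U ∈ E⁵ such that s ↦ ⟪V₃(s), U⟫ is a nonzero constant on I (i.e., the curve is a V₃ slant helix). -/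
open Real
open scoped RealInnerProductSpace ContDiff

/-!
For constant curvatures the Frenet equations give
`(κ₂κ₄ V₁ + κ₁κ₄ V₃ + κ₁κ₃ V₅)' = κ₁κ₂κ₄ V₂ + κ₁κ₄(-κ₂ V₂ + κ₃ V₄) - κ₁κ₃κ₄ V₄ = 0`,
so this combination is a constant vector `W`, and `⟪V₃, W⟫ = κ₁κ₄ ≠ 0` by orthonormality.
The unit vector `W / ‖W‖` is the axis of the slant helix.
-/

section SlantAxis

variable {E : Type*}

def slantAxis [AddCommGroup E] [Module ℝ E] (κ₁ κ₂ κ₃ κ₄ : ℝ) (v₁ v₃ v₅ : E) : E :=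
  (κ₂ * κ₄) • v₁ + (κ₁ * κ₄) • v₃ + (κ₁ * κ₃) • v₅

theorem hasDerivAt_slantAxis [NormedAddCommGroup E] [NormedSpace ℝ E]
    {V₁ V₂ V₃ V₄ V₅ : ℝ → E} {κ₁ κ₂ κ₃ κ₄ s : ℝ}
    (h₁ : HasDerivAt V₁ (κ₁ • V₂ s) s)
    (h₃ : HasDerivAt V₃ (-κ₂ • V₂ s + κ₃ • V₄ s) s)
    (h₅ : HasDerivAt V₅ (-κ₄ • V₄ s) s) :
    HasDerivAt (fun t ↦ slantAxis κ₁ κ₂ κ₃ κ₄ (V₁ t) (V₃ t) (V₅ t)) 0 s := by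
  refine (((h₁.const_smul (κ₂ * κ₄)).add (h₃.const_smul (κ₁ * κ₄))).add
    (h₅.const_smul (κ₁ * κ₃))).congr_deriv ?_
  simp only [smul_add, smul_smul]
  match_scalars <;> ring

theorem inner_slantAxis [NormedAddCommGroup E] [InnerProductSpace ℝ E]
    {v₁ v₃ v₅ : E} (κ₁ κ₂ κ₃ κ₄ : ℝ)
    (h₃₁ : ⟪v₃, v₁⟫ = 0) (h₃ : ‖v₃‖ = 1) (h₃₅ : ⟪v₃, v₅⟫ = 0) :
    ⟪v₃, slantAxis κ₁ κ₂ κ₃ κ₄ v₁ v₃ v₅⟫ = κ₁ * κ₄ := by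
  simp [slantAxis, inner_add_right, real_inner_smul_right, h₃₁, h₃₅, h₃]

end SlantAxis

theorem exists_unit_inner_eq_const {E ι : Type*} [NormedAddCommGroup E] [InnerProductSpace ℝ E]
    {f : ι → E} {S : Set ι} {w : E} {c : ℝ} (hw : w ≠ 0) (hc : c ≠ 0)
    (hfw : ∀ s ∈ S, ⟪f s, w⟫ = c) :
    ∃ U : E, ‖U‖ = 1 ∧ ∃ c' : ℝ, c' ≠ 0 ∧ ∀ s ∈ S, ⟪f s, U⟫ = c' := by
  have hw' : ‖w‖ ≠ 0 := norm_ne_zero_iff.mpr hw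
  refine ⟨‖w‖⁻¹ • w, ?_, ‖w‖⁻¹ * c, mul_ne_zero (inv_ne_zero hw') hc, fun s hs ↦ ?_⟩
  · rw [norm_smul, norm_inv, norm_norm, inv_mul_cancel₀ hw']
  · rw [real_inner_smul_right, hfw s hs]

theorem stmt_7_general
    (a b : ℝ) (hab : a < b)
    (V₁ V₂ V₃ V₄ V₅ : ℝ → EuclideanSpace ℝ (Fin 5))
    (k₁ k₂ k₃ k₄ : ℝ → ℝ)
    (hk₁ : ∀ s ∈ Set.Ioo a b, 0 < k₁ s)
    (hk₄ : ∀ s ∈ Set.Ioo a b, 0 < k₄ s)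
    (horth : ∀ s ∈ Set.Ioo a b, Orthonormal ℝ ![V₁ s, V₂ s, V₃ s, V₄ s, V₅ s])
    (hF₁ : ∀ s ∈ Set.Ioo a b, HasDerivAt V₁ (k₁ s • V₂ s) s)
    (hF₃ : ∀ s ∈ Set.Ioo a b, HasDerivAt V₃ (-(k₂ s) • V₂ s + k₃ s • V₄ s) s)
    (hF₅ : ∀ s ∈ Set.Ioo a b, HasDerivAt V₅ (-(k₄ s) • V₄ s) s)
    (hc₁ : ∃ c : ℝ, ∀ s ∈ Set.Ioo a b, k₁ s = c)
    (hc₂ : ∃ c : ℝ, ∀ s ∈ Set.Ioo a b, k₂ s = c)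
    (hc₃ : ∃ c : ℝ, ∀ s ∈ Set.Ioo a b, k₃ s = c)
    (hc₄ : ∃ c : ℝ, ∀ s ∈ Set.Ioo a b, k₄ s = c) :
    ∃ U : EuclideanSpace ℝ (Fin 5), ‖U‖ = 1 ∧
      ∃ c : ℝ, c ≠ 0 ∧ ∀ s ∈ Set.Ioo a b, ⟪V₃ s, U⟫ = c := by
  obtain ⟨κ₁, hκ₁⟩ := hc₁
  obtain ⟨κ₂, hκ₂⟩ := hc₂
  obtain ⟨κ₃, hκ₃⟩ := hc₃
  obtain ⟨κ₄, hκ₄⟩ := hc₄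
  obtain ⟨s₀, hs₀⟩ : (Set.Ioo a b).Nonempty := Set.nonempty_Ioo.mpr hab
  have hκ : κ₁ * κ₄ ≠ 0 :=
    (mul_pos (hκ₁ s₀ hs₀ ▸ hk₁ s₀ hs₀) (hκ₄ s₀ hs₀ ▸ hk₄ s₀ hs₀)).ne'
  set W := fun t ↦ slantAxis κ₁ κ₂ κ₃ κ₄ (V₁ t) (V₃ t) (V₅ t)
  have hW' : ∀ s ∈ Set.Ioo a b, HasDerivAt W 0 s := fun s hs ↦ by
    apply hasDerivAt_slantAxis (V₂ := V₂) (V₄ := V₄)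
    · simpa [hκ₁ s hs] using hF₁ s hs
    · simpa [hκ₂ s hs, hκ₃ s hs] using hF₃ s hs
    · simpa [hκ₄ s hs] using hF₅ s hs
  have hW_const : ∀ s ∈ Set.Ioo a b, W s = W s₀ := fun s hs ↦
    isOpen_Ioo.is_const_of_deriv_eq_zero isPreconnected_Ioo
      (fun t ht ↦ (hW' t ht).differentiableAt.differentiableWithinAt)
      (fun t ht ↦ (hW' t ht).deriv) hs hs₀
  have hV₃W : ∀ s ∈ Set.Ioo a b, ⟪V₃ s, W s₀⟫ = κ₁ * κ₄ := fun s hs ↦ by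
    have h := horth s hs
    rw [← hW_const s hs]
    exact inner_slantAxis κ₁ κ₂ κ₃ κ₄ (by simpa using h.2 (by decide : (2 : Fin 5) ≠ 0))
      (by simpa using h.1 2) (by simpa using h.2 (by decide : (2 : Fin 5) ≠ 4))
  refine exists_unit_inner_eq_const (fun h ↦ hκ ?_) hκ hV₃W
  simpa [h] using (hV₃W s₀ hs₀).symm

theorem stmt_7
    (a b : ℝ) (hab : a < b)
    (V₁ V₂ V₃ V₄ V₅ : ℝ → EuclideanSpace ℝ (Fin 5))
    (k₁ k₂ k₃ k₄ : ℝ → ℝ)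
    (hV₁s : ContDiffOn ℝ ∞ V₁ (Set.Ioo a b))
    (hV₂s : ContDiffOn ℝ ∞ V₂ (Set.Ioo a b))
    (hV₃s : ContDiffOn ℝ ∞ V₃ (Set.Ioo a b))
    (hV₄s : ContDiffOn ℝ ∞ V₄ (Set.Ioo a b))
    (hV₅s : ContDiffOn ℝ ∞ V₅ (Set.Ioo a b))
    (hk₁s : ContDiffOn ℝ ∞ k₁ (Set.Ioo a b))
    (hk₂s : ContDiffOn ℝ ∞ k₂ (Set.Ioo a b))
    (hk₃s : ContDiffOn ℝ ∞ k₃ (Set.Ioo a b))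
    (hk₄s : ContDiffOn ℝ ∞ k₄ (Set.Ioo a b))
    (hk₁ : ∀ s ∈ Set.Ioo a b, 0 < k₁ s)
    (hk₂ : ∀ s ∈ Set.Ioo a b, 0 < k₂ s)
    (hk₃ : ∀ s ∈ Set.Ioo a b, 0 < k₃ s)
    (hk₄ : ∀ s ∈ Set.Ioo a b, 0 < k₄ s)
    (horth : ∀ s ∈ Set.Ioo a b, Orthonormal ℝ ![V₁ s, V₂ s, V₃ s, V₄ s, V₅ s])
    (hF₁ : ∀ s ∈ Set.Ioo a b, HasDerivAt V₁ (k₁ s • V₂ s) s)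
    (hF₂ : ∀ s ∈ Set.Ioo a b, HasDerivAt V₂ (-(k₁ s) • V₁ s + k₂ s • V₃ s) s)
    (hF₃ : ∀ s ∈ Set.Ioo a b, HasDerivAt V₃ (-(k₂ s) • V₂ s + k₃ s • V₄ s) s)
    (hF₄ : ∀ s ∈ Set.Ioo a b, HasDerivAt V₄ (-(k₃ s) • V₃ s + k₄ s • V₅ s) s)
    (hF₅ : ∀ s ∈ Set.Ioo a b, HasDerivAt V₅ (-(k₄ s) • V₄ s) s)
    (hc₁ : ∃ c : ℝ, ∀ s ∈ Set.Ioo a b, k₁ s = c)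
    (hc₂ : ∃ c : ℝ, ∀ s ∈ Set.Ioo a b, k₂ s = c)
    (hc₃ : ∃ c : ℝ, ∀ s ∈ Set.Ioo a b, k₃ s = c)
    (hc₄ : ∃ c : ℝ, ∀ s ∈ Set.Ioo a b, k₄ s = c) :
    ∃ U : EuclideanSpace ℝ (Fin 5), ‖U‖ = 1 ∧
      ∃ c : ℝ, c ≠ 0 ∧ ∀ s ∈ Set.Ioo a b, ⟪V₃ s, U⟫ = c :=
  stmt_7_general a b hab V₁ V₂ V₃ V₄ V₅ k₁ k₂ k₃ k₄ hk₁ hk₄ horth hF₁ hF₃ hF₅ hc₁ hc₂ hc₃ hc₄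
end

section
/- Let V₁,…,V₅ : I → E⁵ be a Frenet frame with positive smooth curvatures k₁,k₂,k₃,k₄ satisfying the Frenet equations on an open interval I, and define f : I → ℝ by f = (k₄/k₃)′ · (1/k₂). Then there exists a constant unit vector U ∈ E⁵ such that s ↦ ⟪V₅(s), U⟫ is a nonzero constant on I (i.e., the curve is a V₅ slant helix) if and only if the differential equation ( k₄k₂/(k₁k₃) + f′/k₁ )′ + f·k₁ = 0 holds on I. -/
open Set Filter
open scoped RealInnerProductSpace ContDiff

/-!
Write `uᵢ = ⟪Vᵢ, U⟫`. Because the Frenet matrix is skew-symmetric, a vector `U` is constant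
exactly when its components `(u₁, …, u₅)` solve the Frenet system themselves. If `u₅ = c ≠ 0`, the
system forces in turn `u₄ = 0`, `u₃ = c k₄/k₃`, `u₂ = -c f`, `u₁ = c (k₄k₂/(k₁k₃) + f′/k₁)`, and
the equation `u₁′ = k₁u₂` becomes the differential equation. Conversely, under the differential
equation these five functions (with `c = 1`) solve the system, so `W = ∑ uᵢVᵢ` is a constant
vector with `⟪V₅, W⟫ = 1`, and `W/‖W‖` is the required `U`.
-/

structure IsFrenetSolution {M : Type*} [NormedAddCommGroup M] [NormedSpace ℝ M]
    (S : Set ℝ) (k₁ k₂ k₃ k₄ : ℝ → ℝ) (u₁ u₂ u₃ u₄ u₅ : ℝ → M) : Prop where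
  deriv₁ : ∀ s ∈ S, HasDerivAt u₁ (k₁ s • u₂ s) s
  deriv₂ : ∀ s ∈ S, HasDerivAt u₂ (-(k₁ s) • u₁ s + k₂ s • u₃ s) s
  deriv₃ : ∀ s ∈ S, HasDerivAt u₃ (-(k₂ s) • u₂ s + k₃ s • u₄ s) s
  deriv₄ : ∀ s ∈ S, HasDerivAt u₄ (-(k₃ s) • u₃ s + k₄ s • u₅ s) s
  deriv₅ : ∀ s ∈ S, HasDerivAt u₅ (-(k₄ s) • u₄ s) s

theorem HasDerivAt.congr_of_eqOn {F : Type*} [NormedAddCommGroup F] [NormedSpace ℝ F]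
    {φ ψ : ℝ → F} {a : F} {S : Set ℝ} {s : ℝ} (h : HasDerivAt ψ a s) (hS : IsOpen S)
    (hs : s ∈ S) (heq : EqOn φ ψ S) : HasDerivAt φ a s :=
  h.congr_of_eventuallyEq (eventuallyEq_of_mem (hS.mem_nhds hs) heq)

theorem ContDiffOn.hasDerivAt_deriv_of_isOpen {F : Type*} [NormedAddCommGroup F] [NormedSpace ℝ F]
    {φ : ℝ → F} {S : Set ℝ} {n : WithTop ℕ∞} (hφ : ContDiffOn ℝ n φ S) (hn : n ≠ 0)
    (hS : IsOpen S) {s : ℝ} (hs : s ∈ S) : HasDerivAt φ (deriv φ s) s :=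
  ((hφ.contDiffAt (hS.mem_nhds hs)).differentiableAt hn).hasDerivAt

namespace IsFrenetSolution

variable {M N : Type*} [NormedAddCommGroup M] [NormedSpace ℝ M]
  [NormedAddCommGroup N] [NormedSpace ℝ N]
  {S : Set ℝ} {k₁ k₂ k₃ k₄ : ℝ → ℝ} {V₁ V₂ V₃ V₄ V₅ : ℝ → M}

theorem map (hV : IsFrenetSolution S k₁ k₂ k₃ k₄ V₁ V₂ V₃ V₄ V₅) (L : M →L[ℝ] N) :
    IsFrenetSolution S k₁ k₂ k₃ k₄ (L ∘ V₁) (L ∘ V₂) (L ∘ V₃) (L ∘ V₄) (L ∘ V₅) := by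
  have hL {V : ℝ → M} {v : M} {s : ℝ} (h : HasDerivAt V v s) : HasDerivAt (L ∘ V) (L v) s :=
    L.hasFDerivAt.comp_hasDerivAt s h
  exact ⟨fun s hs => by simpa using hL (hV.deriv₁ s hs),
    fun s hs => by simpa using hL (hV.deriv₂ s hs), fun s hs => by simpa using hL (hV.deriv₃ s hs),
    fun s hs => by simpa using hL (hV.deriv₄ s hs), fun s hs => by simpa using hL (hV.deriv₅ s hs)⟩

-- The Frenet matrix is skew-symmetric, so the system is its own adjoint.
theorem hasDerivAt_sum_smul_eq_zero (hV : IsFrenetSolution S k₁ k₂ k₃ k₄ V₁ V₂ V₃ V₄ V₅)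
    {u₁ u₂ u₃ u₄ u₅ : ℝ → ℝ} (hu : IsFrenetSolution S k₁ k₂ k₃ k₄ u₁ u₂ u₃ u₄ u₅)
    {s : ℝ} (hs : s ∈ S) :
    HasDerivAt (fun t => u₁ t • V₁ t + u₂ t • V₂ t + u₃ t • V₃ t + u₄ t • V₄ t + u₅ t • V₅ t)
      0 s := by
  have h := (((((hu.deriv₁ s hs).smul (hV.deriv₁ s hs)).add
    ((hu.deriv₂ s hs).smul (hV.deriv₂ s hs))).add ((hu.deriv₃ s hs).smul (hV.deriv₃ s hs))).add
    ((hu.deriv₄ s hs).smul (hV.deriv₄ s hs))).add ((hu.deriv₅ s hs).smul (hV.deriv₅ s hs))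
  exact h.congr_deriv (by module)

theorem slant_ode_of_eqOn_const (hS : IsOpen S) {u₁ u₂ u₃ u₄ u₅ f : ℝ → ℝ} {c : ℝ}
    (hu : IsFrenetSolution S k₁ k₂ k₃ k₄ u₁ u₂ u₃ u₄ u₅) (hc : c ≠ 0)
    (hu₅ : EqOn u₅ (fun _ => c) S)
    (hk₁ : ∀ s ∈ S, k₁ s ≠ 0) (hk₂ : ∀ s ∈ S, k₂ s ≠ 0) (hk₃ : ∀ s ∈ S, k₃ s ≠ 0)
    (hk₄ : ∀ s ∈ S, k₄ s ≠ 0)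
    (hf : ∀ s ∈ S, f s = deriv (fun t => k₄ t / k₃ t) s * (1 / k₂ s)) :
    ∀ s ∈ S, deriv (fun t => k₄ t * k₂ t / (k₁ t * k₃ t) + deriv f t / k₁ t) s
      + f s * k₁ s = 0 := by
  have h₄ : EqOn u₄ (fun _ => 0) S := fun s hs => by
    have h := (hu.deriv₅ s hs).unique ((hasDerivAt_const s c).congr_of_eqOn hS hs hu₅)
    simpa [hk₄ s hs] using h
  have h₃ : EqOn u₃ (fun t => c * (k₄ t / k₃ t)) S := fun s hs => by
    have h := (hu.deriv₄ s hs).unique ((hasDerivAt_const s (0 : ℝ)).congr_of_eqOn hS hs h₄)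
    simp only [smul_eq_mul, hu₅ hs] at h
    field_simp [hk₃ s hs]
    linarith
  have hH : ∀ s ∈ S, HasDerivAt (fun t => k₄ t / k₃ t) (-(k₂ s * u₂ s) / c) s := fun s hs => by
    have h := ((hu.deriv₃ s hs).div_const c).congr_of_eqOn (φ := fun t => k₄ t / k₃ t) hS hs
      (fun t ht => by simp only [h₃ ht]; field_simp)
    simpa [h₄ hs] using h
  have h₂ : EqOn f (fun t => -u₂ t / c) S := fun s hs => by
    simp only [hf s hs, (hH s hs).deriv]
    field_simp [hk₂ s hs]
  have hdf : ∀ s ∈ S, deriv f s = (k₁ s * u₁ s - k₂ s * u₃ s) / c := fun s hs => by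
    have h := ((hu.deriv₂ s hs).neg.div_const c).congr_of_eqOn hS hs h₂
    rw [h.deriv]
    simp only [smul_eq_mul]
    ring
  have h₁ : EqOn (fun t => k₄ t * k₂ t / (k₁ t * k₃ t) + deriv f t / k₁ t)
      (fun t => u₁ t / c) S := fun s hs => by
    simp only [hdf s hs, h₃ hs]
    field_simp [hk₁ s hs, hk₃ s hs]
    ring
  intro s hs
  rw [(((hu.deriv₁ s hs).div_const c).congr_of_eqOn hS hs h₁).deriv, h₂ hs]
  simp only [smul_eq_mul]
  field_simp
  ring

theorem of_slant_ode (hS : IsOpen S) {f : ℝ → ℝ}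
    (hk₁s : ContDiffOn ℝ ∞ k₁ S) (hk₂s : ContDiffOn ℝ ∞ k₂ S) (hk₃s : ContDiffOn ℝ ∞ k₃ S)
    (hk₄s : ContDiffOn ℝ ∞ k₄ S)
    (hk₁ : ∀ s ∈ S, k₁ s ≠ 0) (hk₂ : ∀ s ∈ S, k₂ s ≠ 0) (hk₃ : ∀ s ∈ S, k₃ s ≠ 0)
    (hf : ∀ s ∈ S, f s = deriv (fun t => k₄ t / k₃ t) s * (1 / k₂ s))
    (hode : ∀ s ∈ S, deriv (fun t => k₄ t * k₂ t / (k₁ t * k₃ t) + deriv f t / k₁ t) s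
      + f s * k₁ s = 0) :
    IsFrenetSolution S k₁ k₂ k₃ k₄ (fun t => k₄ t * k₂ t / (k₁ t * k₃ t) + deriv f t / k₁ t)
      (fun t => -f t) (fun t => k₄ t / k₃ t) (fun _ => 0) (fun _ => 1) := by
  have hH : ContDiffOn ℝ ∞ (fun t => k₄ t / k₃ t) S := hk₄s.div hk₃s hk₃
  have hfs : ContDiffOn ℝ ∞ f S :=
    ((hH.deriv_of_isOpen hS le_rfl).mul (contDiffOn_const.div hk₂s hk₂)).congr hf
  have hG : ContDiffOn ℝ ∞ (fun t => k₄ t * k₂ t / (k₁ t * k₃ t) + deriv f t / k₁ t) S :=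
    ((hk₄s.mul hk₂s).div (hk₁s.mul hk₃s) fun s hs => mul_ne_zero (hk₁ s hs) (hk₃ s hs)).add
      ((hfs.deriv_of_isOpen hS le_rfl).div hk₁s hk₁)
  refine ⟨fun s hs => ?_, fun s hs => ?_, fun s hs => ?_, fun s hs => ?_, fun s hs => ?_⟩
  · refine (hG.hasDerivAt_deriv_of_isOpen (by simp) hS hs).congr_deriv ?_
    rw [smul_eq_mul]
    linear_combination hode s hs
  · refine (hfs.hasDerivAt_deriv_of_isOpen (by simp) hS hs).neg.congr_deriv ?_
    simp only [smul_eq_mul]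
    field_simp [hk₁ s hs, hk₃ s hs]
    ring
  · refine (hH.hasDerivAt_deriv_of_isOpen (by simp) hS hs).congr_deriv ?_
    simp only [smul_eq_mul, hf s hs]
    field_simp [hk₂ s hs]
    ring
  · refine (hasDerivAt_const s (0 : ℝ)).congr_deriv ?_
    simp only [smul_eq_mul]
    field_simp [hk₃ s hs]
    ring
  · exact (hasDerivAt_const s (1 : ℝ)).congr_deriv (by simp)

end IsFrenetSolution

theorem stmt_9_general
    (a b : ℝ) (hab : a < b)
    (V₁ V₂ V₃ V₄ V₅ : ℝ → EuclideanSpace ℝ (Fin 5))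
    (k₁ k₂ k₃ k₄ : ℝ → ℝ)
    (hk₁s : ContDiffOn ℝ ∞ k₁ (Set.Ioo a b))
    (hk₂s : ContDiffOn ℝ ∞ k₂ (Set.Ioo a b))
    (hk₃s : ContDiffOn ℝ ∞ k₃ (Set.Ioo a b))
    (hk₄s : ContDiffOn ℝ ∞ k₄ (Set.Ioo a b))
    (hk₁ : ∀ s ∈ Set.Ioo a b, 0 < k₁ s)
    (hk₂ : ∀ s ∈ Set.Ioo a b, 0 < k₂ s)
    (hk₃ : ∀ s ∈ Set.Ioo a b, 0 < k₃ s)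
    (hk₄ : ∀ s ∈ Set.Ioo a b, 0 < k₄ s)
    (horth : ∀ s ∈ Set.Ioo a b, Orthonormal ℝ ![V₁ s, V₂ s, V₃ s, V₄ s, V₅ s])
    (hF₁ : ∀ s ∈ Set.Ioo a b, HasDerivAt V₁ (k₁ s • V₂ s) s)
    (hF₂ : ∀ s ∈ Set.Ioo a b, HasDerivAt V₂ (-(k₁ s) • V₁ s + k₂ s • V₃ s) s)
    (hF₃ : ∀ s ∈ Set.Ioo a b, HasDerivAt V₃ (-(k₂ s) • V₂ s + k₃ s • V₄ s) s)
    (hF₄ : ∀ s ∈ Set.Ioo a b, HasDerivAt V₄ (-(k₃ s) • V₃ s + k₄ s • V₅ s) s)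
    (hF₅ : ∀ s ∈ Set.Ioo a b, HasDerivAt V₅ (-(k₄ s) • V₄ s) s)
    (f : ℝ → ℝ)
    (hf : ∀ s ∈ Set.Ioo a b, f s = deriv (fun t => k₄ t / k₃ t) s * (1 / k₂ s)) :
    (∃ U : EuclideanSpace ℝ (Fin 5), ‖U‖ = 1 ∧
        ∃ c : ℝ, c ≠ 0 ∧ ∀ s ∈ Set.Ioo a b, ⟪V₅ s, U⟫ = c) ↔
    (∀ s ∈ Set.Ioo a b,
        deriv (fun t => k₄ t * k₂ t / (k₁ t * k₃ t) + deriv f t / k₁ t) s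
          + f s * k₁ s = 0) := by
  have hS : IsOpen (Ioo a b) := isOpen_Ioo
  have hV : IsFrenetSolution (Ioo a b) k₁ k₂ k₃ k₄ V₁ V₂ V₃ V₄ V₅ := ⟨hF₁, hF₂, hF₃, hF₄, hF₅⟩
  have hne {k : ℝ → ℝ} (hk : ∀ s ∈ Ioo a b, 0 < k s) : ∀ s ∈ Ioo a b, k s ≠ 0 :=
    fun s hs => (hk s hs).ne'
  constructor
  · rintro ⟨U, -, c, hc, hcU⟩
    refine (hV.map (innerSL ℝ U)).slant_ode_of_eqOn_const hS hc (fun s hs => ?_)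
      (hne hk₁) (hne hk₂) (hne hk₃) (hne hk₄) hf
    exact (real_inner_comm _ _).trans (hcU s hs)
  · intro hode
    have hu := IsFrenetSolution.of_slant_ode hS hk₁s hk₂s hk₃s hk₄s (hne hk₁) (hne hk₂) (hne hk₃)
      hf hode
    have hsum := fun s hs => hV.hasDerivAt_sum_smul_eq_zero hu (s := s) hs
    obtain ⟨W, hW⟩ := hS.exists_is_const_of_deriv_eq_zero isPreconnected_Ioo
      (fun s hs => (hsum s hs).differentiableAt.differentiableWithinAt)
      (fun s hs => (hsum s hs).deriv)
    have hV₅W : ∀ s ∈ Ioo a b, ⟪V₅ s, W⟫ = 1 := fun s hs => by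
      have h := (horth s hs).inner_right_fintype
        ![k₄ s * k₂ s / (k₁ s * k₃ s) + deriv f s / k₁ s, -f s, k₄ s / k₃ s, 0, 1] 4
      simpa [Fin.sum_univ_five, ← hW s hs] using h
    have hW0 : W ≠ 0 := by
      rintro rfl
      simpa using hV₅W _ ⟨left_lt_add_div_two.2 hab, add_div_two_lt_right.2 hab⟩
    refine ⟨‖W‖⁻¹ • W, norm_smul_inv_norm hW0, ‖W‖⁻¹, by simpa using hW0, fun s hs => ?_⟩
    rw [real_inner_smul_right, hV₅W s hs, mul_one]

theorem stmt_9
    (a b : ℝ) (hab : a < b)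
    (V₁ V₂ V₃ V₄ V₅ : ℝ → EuclideanSpace ℝ (Fin 5))
    (k₁ k₂ k₃ k₄ : ℝ → ℝ)
    (hV₁s : ContDiffOn ℝ ∞ V₁ (Set.Ioo a b))
    (hV₂s : ContDiffOn ℝ ∞ V₂ (Set.Ioo a b))
    (hV₃s : ContDiffOn ℝ ∞ V₃ (Set.Ioo a b))
    (hV₄s : ContDiffOn ℝ ∞ V₄ (Set.Ioo a b))
    (hV₅s : ContDiffOn ℝ ∞ V₅ (Set.Ioo a b))
    (hk₁s : ContDiffOn ℝ ∞ k₁ (Set.Ioo a b))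
    (hk₂s : ContDiffOn ℝ ∞ k₂ (Set.Ioo a b))
    (hk₃s : ContDiffOn ℝ ∞ k₃ (Set.Ioo a b))
    (hk₄s : ContDiffOn ℝ ∞ k₄ (Set.Ioo a b))
    (hk₁ : ∀ s ∈ Set.Ioo a b, 0 < k₁ s)
    (hk₂ : ∀ s ∈ Set.Ioo a b, 0 < k₂ s)
    (hk₃ : ∀ s ∈ Set.Ioo a b, 0 < k₃ s)
    (hk₄ : ∀ s ∈ Set.Ioo a b, 0 < k₄ s)
    (horth : ∀ s ∈ Set.Ioo a b, Orthonormal ℝ ![V₁ s, V₂ s, V₃ s, V₄ s, V₅ s])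
    (hF₁ : ∀ s ∈ Set.Ioo a b, HasDerivAt V₁ (k₁ s • V₂ s) s)
    (hF₂ : ∀ s ∈ Set.Ioo a b, HasDerivAt V₂ (-(k₁ s) • V₁ s + k₂ s • V₃ s) s)
    (hF₃ : ∀ s ∈ Set.Ioo a b, HasDerivAt V₃ (-(k₂ s) • V₂ s + k₃ s • V₄ s) s)
    (hF₄ : ∀ s ∈ Set.Ioo a b, HasDerivAt V₄ (-(k₃ s) • V₃ s + k₄ s • V₅ s) s)
    (hF₅ : ∀ s ∈ Set.Ioo a b, HasDerivAt V₅ (-(k₄ s) • V₄ s) s)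
    (f : ℝ → ℝ)
    (hf : ∀ s ∈ Set.Ioo a b, f s = deriv (fun t => k₄ t / k₃ t) s * (1 / k₂ s)) :
    (∃ U : EuclideanSpace ℝ (Fin 5), ‖U‖ = 1 ∧
        ∃ c : ℝ, c ≠ 0 ∧ ∀ s ∈ Set.Ioo a b, ⟪V₅ s, U⟫ = c) ↔
    (∀ s ∈ Set.Ioo a b,
        deriv (fun t => k₄ t * k₂ t / (k₁ t * k₃ t) + deriv f t / k₁ t) s
          + f s * k₁ s = 0) :=
  stmt_9_general a b hab V₁ V₂ V₃ V₄ V₅ k₁ k₂ k₃ k₄ hk₁s hk₂s hk₃s hk₄s hk₁ hk₂ hk₃ hk₄ horth hF₁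
    hF₂ hF₃ hF₄ hF₅ f hf
end

section
/- Let V₁,…,V₅ : I → E⁵ be a Frenet frame with positive smooth curvatures k₁,k₂,k₃,k₄ satisfying the Frenet equations on an open interval I, and define f : I → ℝ by f = (k₄/k₃)′ · (1/k₂). If U ∈ E⁵ is a constant unit vector such that ⟪V₅(s), U⟫ = cos ψ is a nonzero constant on I (so the curve is a V₅ slant helix with axis U), then for every s ∈ I one has U = cos ψ · ( (k₄k₂/(k₁k₃))(s) + (f′/k₁)(s) )·V₁(s) − cos ψ · f(s)·V₂(s) + cos ψ · (k₄/k₃)(s)·V₃(s) + cos ψ · V₅(s). -/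
open Real
open scoped RealInnerProductSpace ContDiff

section FrenetComponents

variable {E : Type*} [NormedAddCommGroup E] [InnerProductSpace ℝ E]
  {V : ℝ → E} {V' W X U : E} {g : ℝ → ℝ} {S : Set ℝ} {t κ μ : ℝ}

theorem inner_eq_deriv_of_hasDerivAt_of_eqOn (hS : IsOpen S) (ht : t ∈ S) (hV : HasDerivAt V V' t)
    (hg : Set.EqOn (fun u => ⟪V u, U⟫) g S) : ⟪V', U⟫ = deriv g t := by
  have hD : HasDerivAt (fun u => ⟪V u, U⟫) ⟪V', U⟫ t := by
    simpa using hV.inner ℝ (hasDerivAt_const t U)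
  rw [← hD.deriv]
  exact Filter.EventuallyEq.deriv_eq (Filter.eventuallyEq_of_mem (hS.mem_nhds ht) hg)

theorem inner_prev_eq_of_hasDerivAt_frenet (hS : IsOpen S) (ht : t ∈ S)
    (hV : HasDerivAt V (-κ • W + μ • X) t) (hg : Set.EqOn (fun u => ⟪V u, U⟫) g S)
    (hκ : κ ≠ 0) : ⟪W, U⟫ = (μ * ⟪X, U⟫ - deriv g t) / κ := by
  have h := inner_eq_deriv_of_hasDerivAt_of_eqOn hS ht hV hg
  rw [inner_add_left, real_inner_smul_left, real_inner_smul_left] at h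
  rw [eq_div_iff hκ]
  linarith

end FrenetComponents

theorem stmt_10_general
    (a b : ℝ)
    (V₁ V₂ V₃ V₄ V₅ : ℝ → EuclideanSpace ℝ (Fin 5))
    (k₁ k₂ k₃ k₄ : ℝ → ℝ)
    (hk₁ : ∀ s ∈ Set.Ioo a b, 0 < k₁ s)
    (hk₂ : ∀ s ∈ Set.Ioo a b, 0 < k₂ s)
    (hk₃ : ∀ s ∈ Set.Ioo a b, 0 < k₃ s)
    (hk₄ : ∀ s ∈ Set.Ioo a b, 0 < k₄ s)
    (horth : ∀ s ∈ Set.Ioo a b, Orthonormal ℝ ![V₁ s, V₂ s, V₃ s, V₄ s, V₅ s])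
    (hF₂ : ∀ s ∈ Set.Ioo a b, HasDerivAt V₂ (-(k₁ s) • V₁ s + k₂ s • V₃ s) s)
    (hF₃ : ∀ s ∈ Set.Ioo a b, HasDerivAt V₃ (-(k₂ s) • V₂ s + k₃ s • V₄ s) s)
    (hF₄ : ∀ s ∈ Set.Ioo a b, HasDerivAt V₄ (-(k₃ s) • V₃ s + k₄ s • V₅ s) s)
    (hF₅ : ∀ s ∈ Set.Ioo a b, HasDerivAt V₅ (-(k₄ s) • V₄ s) s)
    (f : ℝ → ℝ)
    (hf : ∀ s ∈ Set.Ioo a b, f s = deriv (fun t => k₄ t / k₃ t) s * (1 / k₂ s))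
    (U : EuclideanSpace ℝ (Fin 5)) (ψ : ℝ)
    (hhelix : ∀ s ∈ Set.Ioo a b, ⟪V₅ s, U⟫ = Real.cos ψ) :
    ∀ s ∈ Set.Ioo a b,
      U = (Real.cos ψ * (k₄ s * k₂ s / (k₁ s * k₃ s) + deriv f s / k₁ s)) • V₁ s
            - (Real.cos ψ * f s) • V₂ s
            + (Real.cos ψ * (k₄ s / k₃ s)) • V₃ s
            + Real.cos ψ • V₅ s := by
  have hI : IsOpen (Set.Ioo a b) := isOpen_Ioo
  have h₄ : ∀ t ∈ Set.Ioo a b, ⟪V₄ t, U⟫ = 0 := fun t ht => by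
    have h := inner_eq_deriv_of_hasDerivAt_of_eqOn hI ht (hF₅ t ht) hhelix
    rw [deriv_const, real_inner_smul_left, neg_mul, neg_eq_zero] at h
    exact (mul_eq_zero.mp h).resolve_left (hk₄ t ht).ne'
  have h₃ : ∀ t ∈ Set.Ioo a b, ⟪V₃ t, U⟫ = Real.cos ψ * (k₄ t / k₃ t) := fun t ht => by
    rw [inner_prev_eq_of_hasDerivAt_frenet hI ht (hF₄ t ht) h₄ (hk₃ t ht).ne', hhelix t ht,
      deriv_const]
    ring
  have h₂ : ∀ t ∈ Set.Ioo a b, ⟪V₂ t, U⟫ = -Real.cos ψ * f t := fun t ht => by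
    rw [inner_prev_eq_of_hasDerivAt_frenet hI ht (hF₃ t ht) h₃ (hk₂ t ht).ne', h₄ t ht,
      deriv_const_mul_field, hf t ht]
    ring
  intro s hs
  have h₁ : ⟪V₁ s, U⟫ = Real.cos ψ * (k₄ s * k₂ s / (k₁ s * k₃ s) + deriv f s / k₁ s) := by
    rw [inner_prev_eq_of_hasDerivAt_frenet hI hs (hF₂ s hs) h₂ (hk₁ s hs).ne', h₃ s hs,
      deriv_const_mul_field]
    field_simp
    ring
  have hU := (horth s hs).sum_inner_smul_eq_of_card_eq_finrank (by simp) U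
  simp only [Fin.sum_univ_five, Matrix.cons_val_zero, Matrix.cons_val_one, Matrix.cons_val_two,
    Matrix.cons_val_three, Matrix.cons_val_four, Matrix.head_cons, Matrix.tail_cons] at hU
  rw [h₁, h₂ s hs, h₃ s hs, h₄ s hs, hhelix s hs, zero_smul] at hU
  rw [← hU, neg_mul, neg_smul]
  abel

theorem stmt_10
    (a b : ℝ) (hab : a < b)
    (V₁ V₂ V₃ V₄ V₅ : ℝ → EuclideanSpace ℝ (Fin 5))
    (k₁ k₂ k₃ k₄ : ℝ → ℝ)
    (hV₁s : ContDiffOn ℝ ∞ V₁ (Set.Ioo a b))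
    (hV₂s : ContDiffOn ℝ ∞ V₂ (Set.Ioo a b))
    (hV₃s : ContDiffOn ℝ ∞ V₃ (Set.Ioo a b))
    (hV₄s : ContDiffOn ℝ ∞ V₄ (Set.Ioo a b))
    (hV₅s : ContDiffOn ℝ ∞ V₅ (Set.Ioo a b))
    (hk₁s : ContDiffOn ℝ ∞ k₁ (Set.Ioo a b))
    (hk₂s : ContDiffOn ℝ ∞ k₂ (Set.Ioo a b))
    (hk₃s : ContDiffOn ℝ ∞ k₃ (Set.Ioo a b))
    (hk₄s : ContDiffOn ℝ ∞ k₄ (Set.Ioo a b))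
    (hk₁ : ∀ s ∈ Set.Ioo a b, 0 < k₁ s)
    (hk₂ : ∀ s ∈ Set.Ioo a b, 0 < k₂ s)
    (hk₃ : ∀ s ∈ Set.Ioo a b, 0 < k₃ s)
    (hk₄ : ∀ s ∈ Set.Ioo a b, 0 < k₄ s)
    (horth : ∀ s ∈ Set.Ioo a b, Orthonormal ℝ ![V₁ s, V₂ s, V₃ s, V₄ s, V₅ s])
    (hF₁ : ∀ s ∈ Set.Ioo a b, HasDerivAt V₁ (k₁ s • V₂ s) s)
    (hF₂ : ∀ s ∈ Set.Ioo a b, HasDerivAt V₂ (-(k₁ s) • V₁ s + k₂ s • V₃ s) s)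
    (hF₃ : ∀ s ∈ Set.Ioo a b, HasDerivAt V₃ (-(k₂ s) • V₂ s + k₃ s • V₄ s) s)
    (hF₄ : ∀ s ∈ Set.Ioo a b, HasDerivAt V₄ (-(k₃ s) • V₃ s + k₄ s • V₅ s) s)
    (hF₅ : ∀ s ∈ Set.Ioo a b, HasDerivAt V₅ (-(k₄ s) • V₄ s) s)
    (f : ℝ → ℝ)
    (hf : ∀ s ∈ Set.Ioo a b, f s = deriv (fun t => k₄ t / k₃ t) s * (1 / k₂ s))
    (U : EuclideanSpace ℝ (Fin 5)) (ψ : ℝ)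
    (hU : ‖U‖ = 1) (hψ : Real.cos ψ ≠ 0)
    (hhelix : ∀ s ∈ Set.Ioo a b, ⟪V₅ s, U⟫ = Real.cos ψ) :
    ∀ s ∈ Set.Ioo a b,
      U = (Real.cos ψ * (k₄ s * k₂ s / (k₁ s * k₃ s) + deriv f s / k₁ s)) • V₁ s
            - (Real.cos ψ * f s) • V₂ s
            + (Real.cos ψ * (k₄ s / k₃ s)) • V₃ s
            + Real.cos ψ • V₅ s :=
  stmt_10_general a b V₁ V₂ V₃ V₄ V₅ k₁ k₂ k₃ k₄ hk₁ hk₂ hk₃ hk₄ horth hF₂ hF₃ hF₄ hF₅ f hf U ψ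
    hhelix
end

section
/- Let V₁,…,V₅ : I → E⁵ be a Frenet frame with positive smooth curvatures k₁,k₂,k₃,k₄ satisfying the Frenet equations on an open interval I. Suppose there exists a constant unit vector U ∈ E⁵ such that s ↦ ⟪V₅(s), U⟫ is a nonzero constant on I (i.e., the curve is a V₅ slant helix), and suppose the function s ↦ ‖V₅′(s)‖ / ‖V₄′(s)‖ is constant on I. Then the function s ↦ ‖V₂′(s)‖ / ‖V₁′(s)‖ is constant on I. -/
/-!
Write `fᵢ = ⟪Vᵢ, U⟫`. The Frenet equations make `(f₁, …, f₅)` solve the transposed Frenet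
system, so `f₅ ≡ c` gives `f₄ ≡ 0` and then `k₃ f₃ = k₄ c`. The ratio `‖V₅′‖ / ‖V₄′‖` equals
`1 / √(1 + (k₃/k₄)²)`, so its constancy makes `k₃/k₄`, hence `f₃`, a nonzero constant. Going
down the system once more gives `f₂ ≡ 0`, then `f₁` constant and `k₂ f₃ = k₁ f₁`, so `k₂/k₁`
is constant, and so is `‖V₂′‖ / ‖V₁′‖ = √(1 + (k₂/k₁)²)`.
-/

open Real
open scoped RealInnerProductSpace ContDiff

lemma sqrt_sq_add_sq_div_of_pos {x : ℝ} (hx : 0 < x) (y : ℝ) :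
    √(x ^ 2 + y ^ 2) / x = √(1 + (y / x) ^ 2) := by
  rw [← sqrt_sq hx.le, ← sqrt_div' _ (sq_nonneg x), sqrt_sq hx.le]
  congr 1
  field_simp

lemma div_eq_sqrt_of_div_sqrt_sq_add_sq_eq {x y c : ℝ} (hx : 0 ≤ x) (hy : 0 < y)
    (h : y / √(y ^ 2 + x ^ 2) = c) : x / y = √(c⁻¹ ^ 2 - 1) := by
  rw [← h, inv_div, sqrt_sq_add_sq_div_of_pos hy, sq_sqrt (by positivity), add_sub_cancel_left,
    sqrt_sq (div_nonneg hx hy.le)]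

section InnerProductSpace

variable {F : Type*} [NormedAddCommGroup F] [InnerProductSpace ℝ F]

lemma Orthonormal.norm_smul {ι : Type*} {v : ι → F} (hv : Orthonormal ℝ v) (i : ι) (x : ℝ) :
    ‖x • v i‖ = |x| := by
  rw [_root_.norm_smul, hv.1 i, mul_one, norm_eq_abs]

lemma Orthonormal.norm_smul_add_smul {ι : Type*} {v : ι → F} (hv : Orthonormal ℝ v) {i j : ι}
    (hij : i ≠ j) (x y : ℝ) : ‖x • v i + y • v j‖ = √(x ^ 2 + y ^ 2) := by
  rw [← sqrt_sq (norm_nonneg _), norm_add_sq_real, real_inner_smul_left, real_inner_smul_right,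
    hv.2 hij, hv.norm_smul, hv.norm_smul]
  simp

lemma inner_eq_zero_of_hasDerivAt_of_inner_eqOn_const {V : ℝ → F} {I : Set ℝ} (hI : IsOpen I)
    {U : F} {c : ℝ} (hc : ∀ t ∈ I, ⟪V t, U⟫ = c) {s : ℝ} (hs : s ∈ I) {d : F}
    (hV : HasDerivAt V d s) : ⟪d, U⟫ = 0 := by
  have hconst : HasDerivAt (fun t ↦ ⟪V t, U⟫) 0 s :=
    (hasDerivAt_const s c).congr_of_eventuallyEq (Filter.eventuallyEq_of_mem (hI.mem_nhds hs) hc)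
  simpa using (hV.inner ℝ (hasDerivAt_const s U)).unique hconst

lemma mul_inner_eq_mul_inner_of_hasDerivAt_of_inner_eqOn_const {V : ℝ → F} {I : Set ℝ}
    (hI : IsOpen I) {U : F} {c : ℝ} (hc : ∀ t ∈ I, ⟪V t, U⟫ = c) {s : ℝ} (hs : s ∈ I)
    {κ τ : ℝ} {X Y : F} (hV : HasDerivAt V (-κ • X + τ • Y) s) : κ * ⟪X, U⟫ = τ * ⟪Y, U⟫ := by
  have := inner_eq_zero_of_hasDerivAt_of_inner_eqOn_const hI hc hs hV
  rw [inner_add_left, real_inner_smul_left, real_inner_smul_left] at this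
  linarith

lemma exists_inner_eqOn_const_of_inner_hasDerivAt_eq_zero {V d : ℝ → F} {I : Set ℝ}
    (hI : IsOpen I) (hI' : IsPreconnected I) {U : F} (hV : ∀ s ∈ I, HasDerivAt V (d s) s)
    (hd : ∀ s ∈ I, ⟪d s, U⟫ = 0) : ∃ c, ∀ s ∈ I, ⟪V s, U⟫ = c := by
  have hderiv (s : ℝ) (hs : s ∈ I) : HasDerivAt (fun t ↦ ⟪V t, U⟫) 0 s := by
    simpa [hd s hs] using (hV s hs).inner ℝ (hasDerivAt_const s U)
  exact hI.exists_is_const_of_deriv_eq_zero hI'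
    (fun s hs ↦ (hderiv s hs).differentiableAt.differentiableWithinAt)
    (fun s hs ↦ (hderiv s hs).deriv)

variable {V₁ V₂ V₃ V₄ V₅ : ℝ → F} {s : ℝ}

lemma norm_deriv_snd_div_norm_deriv_fst_of_frenet {k₁ k₂ : ℝ}
    (horth : Orthonormal ℝ ![V₁ s, V₂ s, V₃ s, V₄ s, V₅ s]) (hk₁ : 0 < k₁)
    (hF₁ : HasDerivAt V₁ (k₁ • V₂ s) s) (hF₂ : HasDerivAt V₂ (-k₁ • V₁ s + k₂ • V₃ s) s) :
    ‖deriv V₂ s‖ / ‖deriv V₁ s‖ = √(1 + (k₂ / k₁) ^ 2) := by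
  have hnorm₁ := horth.norm_smul 1 k₁
  have hnorm₂ := horth.norm_smul_add_smul (show (0 : Fin 5) ≠ 2 by decide) (-k₁) k₂
  simp only [Matrix.cons_val, neg_sq] at hnorm₁ hnorm₂
  rw [hF₁.deriv, hF₂.deriv, hnorm₁, hnorm₂, abs_of_pos hk₁, sqrt_sq_add_sq_div_of_pos hk₁]

lemma norm_deriv_fifth_div_norm_deriv_fourth_of_frenet {k₃ k₄ : ℝ}
    (horth : Orthonormal ℝ ![V₁ s, V₂ s, V₃ s, V₄ s, V₅ s]) (hk₄ : 0 < k₄)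
    (hF₄ : HasDerivAt V₄ (-k₃ • V₃ s + k₄ • V₅ s) s) (hF₅ : HasDerivAt V₅ (-k₄ • V₄ s) s) :
    ‖deriv V₅ s‖ / ‖deriv V₄ s‖ = k₄ / √(k₄ ^ 2 + k₃ ^ 2) := by
  have hnorm₄ := horth.norm_smul_add_smul (show (2 : Fin 5) ≠ 4 by decide) (-k₃) k₄
  have hnorm₅ := horth.norm_smul 3 (-k₄)
  simp only [Matrix.cons_val, neg_sq] at hnorm₄ hnorm₅
  rw [hF₄.deriv, hF₅.deriv, hnorm₄, hnorm₅, abs_neg, abs_of_pos hk₄, add_comm]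

end InnerProductSpace

theorem stmt_12_general
    (a b : ℝ)
    (V₁ V₂ V₃ V₄ V₅ : ℝ → EuclideanSpace ℝ (Fin 5))
    (k₁ k₂ k₃ k₄ : ℝ → ℝ)
    (hk₁ : ∀ s ∈ Set.Ioo a b, 0 < k₁ s)
    (hk₂ : ∀ s ∈ Set.Ioo a b, 0 < k₂ s)
    (hk₃ : ∀ s ∈ Set.Ioo a b, 0 < k₃ s)
    (hk₄ : ∀ s ∈ Set.Ioo a b, 0 < k₄ s)
    (horth : ∀ s ∈ Set.Ioo a b, Orthonormal ℝ ![V₁ s, V₂ s, V₃ s, V₄ s, V₅ s])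
    (hF₁ : ∀ s ∈ Set.Ioo a b, HasDerivAt V₁ (k₁ s • V₂ s) s)
    (hF₂ : ∀ s ∈ Set.Ioo a b, HasDerivAt V₂ (-(k₁ s) • V₁ s + k₂ s • V₃ s) s)
    (hF₃ : ∀ s ∈ Set.Ioo a b, HasDerivAt V₃ (-(k₂ s) • V₂ s + k₃ s • V₄ s) s)
    (hF₄ : ∀ s ∈ Set.Ioo a b, HasDerivAt V₄ (-(k₃ s) • V₃ s + k₄ s • V₅ s) s)
    (hF₅ : ∀ s ∈ Set.Ioo a b, HasDerivAt V₅ (-(k₄ s) • V₄ s) s)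
    (hhelix : ∃ U : EuclideanSpace ℝ (Fin 5), ‖U‖ = 1 ∧
        ∃ c : ℝ, c ≠ 0 ∧ ∀ s ∈ Set.Ioo a b, ⟪V₅ s, U⟫ = c)
    (hratio : ∃ c : ℝ, ∀ s ∈ Set.Ioo a b, ‖deriv V₅ s‖ / ‖deriv V₄ s‖ = c) :
    ∃ c : ℝ, ∀ s ∈ Set.Ioo a b, ‖deriv V₂ s‖ / ‖deriv V₁ s‖ = c := by
  obtain ⟨U, -, c, hc, hV₅U⟩ := hhelix
  obtain ⟨ρ, hρ⟩ := hratio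
  have hI := isOpen_Ioo (a := a) (b := b)
  have hV₄U (s) (hs : s ∈ Set.Ioo a b) : ⟪V₄ s, U⟫ = 0 := by
    have := inner_eq_zero_of_hasDerivAt_of_inner_eqOn_const hI hV₅U hs (hF₅ s hs)
    simpa [real_inner_smul_left, (hk₄ s hs).ne'] using this
  have hk₃₄ (s) (hs : s ∈ Set.Ioo a b) : k₃ s / k₄ s = √(ρ⁻¹ ^ 2 - 1) := by
    refine div_eq_sqrt_of_div_sqrt_sq_add_sq_eq (hk₃ s hs).le (hk₄ s hs) ?_
    rw [← norm_deriv_fifth_div_norm_deriv_fourth_of_frenet (horth s hs) (hk₄ s hs) (hF₄ s hs)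
      (hF₅ s hs), hρ s hs]
  have hV₃U (s) (hs : s ∈ Set.Ioo a b) : ⟪V₃ s, U⟫ = c / √(ρ⁻¹ ^ 2 - 1) := by
    have := mul_inner_eq_mul_inner_of_hasDerivAt_of_inner_eqOn_const hI hV₄U hs (hF₄ s hs)
    rw [hV₅U s hs] at this
    rw [← hk₃₄ s hs, div_div_eq_mul_div, eq_div_iff (hk₃ s hs).ne']
    linarith
  set γ := c / √(ρ⁻¹ ^ 2 - 1) with hγ
  have hV₂U (s) (hs : s ∈ Set.Ioo a b) : ⟪V₂ s, U⟫ = 0 := by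
    have := mul_inner_eq_mul_inner_of_hasDerivAt_of_inner_eqOn_const hI hV₃U hs (hF₃ s hs)
    simpa [hV₄U s hs, (hk₂ s hs).ne'] using this
  obtain ⟨m, hV₁U⟩ := exists_inner_eqOn_const_of_inner_hasDerivAt_eq_zero hI isPreconnected_Ioo
    hF₁ (fun s hs ↦ by rw [real_inner_smul_left, hV₂U s hs, mul_zero])
  have hk₁₂ (s) (hs : s ∈ Set.Ioo a b) : k₂ s / k₁ s = m / γ := by
    have := mul_inner_eq_mul_inner_of_hasDerivAt_of_inner_eqOn_const hI hV₂U hs (hF₂ s hs)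
    rw [hV₁U s hs, hV₃U s hs] at this
    have hγ₀ : γ ≠ 0 := by
      rw [hγ, ← hk₃₄ s hs]
      exact div_ne_zero hc (div_pos (hk₃ s hs) (hk₄ s hs)).ne'
    rw [div_eq_div_iff (hk₁ s hs).ne' hγ₀]
    linarith
  refine ⟨√(1 + (m / γ) ^ 2), fun s hs ↦ ?_⟩
  rw [norm_deriv_snd_div_norm_deriv_fst_of_frenet (horth s hs) (hk₁ s hs) (hF₁ s hs) (hF₂ s hs),
    hk₁₂ s hs]

theorem stmt_12
    (a b : ℝ) (hab : a < b)
    (V₁ V₂ V₃ V₄ V₅ : ℝ → EuclideanSpace ℝ (Fin 5))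
    (k₁ k₂ k₃ k₄ : ℝ → ℝ)
    (hV₁s : ContDiffOn ℝ ∞ V₁ (Set.Ioo a b))
    (hV₂s : ContDiffOn ℝ ∞ V₂ (Set.Ioo a b))
    (hV₃s : ContDiffOn ℝ ∞ V₃ (Set.Ioo a b))
    (hV₄s : ContDiffOn ℝ ∞ V₄ (Set.Ioo a b))
    (hV₅s : ContDiffOn ℝ ∞ V₅ (Set.Ioo a b))
    (hk₁s : ContDiffOn ℝ ∞ k₁ (Set.Ioo a b))
    (hk₂s : ContDiffOn ℝ ∞ k₂ (Set.Ioo a b))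
    (hk₃s : ContDiffOn ℝ ∞ k₃ (Set.Ioo a b))
    (hk₄s : ContDiffOn ℝ ∞ k₄ (Set.Ioo a b))
    (hk₁ : ∀ s ∈ Set.Ioo a b, 0 < k₁ s)
    (hk₂ : ∀ s ∈ Set.Ioo a b, 0 < k₂ s)
    (hk₃ : ∀ s ∈ Set.Ioo a b, 0 < k₃ s)
    (hk₄ : ∀ s ∈ Set.Ioo a b, 0 < k₄ s)
    (horth : ∀ s ∈ Set.Ioo a b, Orthonormal ℝ ![V₁ s, V₂ s, V₃ s, V₄ s, V₅ s])
    (hF₁ : ∀ s ∈ Set.Ioo a b, HasDerivAt V₁ (k₁ s • V₂ s) s)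
    (hF₂ : ∀ s ∈ Set.Ioo a b, HasDerivAt V₂ (-(k₁ s) • V₁ s + k₂ s • V₃ s) s)
    (hF₃ : ∀ s ∈ Set.Ioo a b, HasDerivAt V₃ (-(k₂ s) • V₂ s + k₃ s • V₄ s) s)
    (hF₄ : ∀ s ∈ Set.Ioo a b, HasDerivAt V₄ (-(k₃ s) • V₃ s + k₄ s • V₅ s) s)
    (hF₅ : ∀ s ∈ Set.Ioo a b, HasDerivAt V₅ (-(k₄ s) • V₄ s) s)
    (hhelix : ∃ U : EuclideanSpace ℝ (Fin 5), ‖U‖ = 1 ∧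
        ∃ c : ℝ, c ≠ 0 ∧ ∀ s ∈ Set.Ioo a b, ⟪V₅ s, U⟫ = c)
    (hratio : ∃ c : ℝ, ∀ s ∈ Set.Ioo a b, ‖deriv V₅ s‖ / ‖deriv V₄ s‖ = c) :
    ∃ c : ℝ, ∀ s ∈ Set.Ioo a b, ‖deriv V₂ s‖ / ‖deriv V₁ s‖ = c :=
  stmt_12_general a b V₁ V₂ V₃ V₄ V₅ k₁ k₂ k₃ k₄ hk₁ hk₂ hk₃ hk₄ horth hF₁ hF₂ hF₃ hF₄ hF₅ hhelix
    hratio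
end
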